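/- Let X and Y be real Banach spaces. If the norm of the direct sum X ⊕₁ Y (product space with norm ‖(x,y)‖ = ‖x‖ + ‖y‖) is average non rough, then both the norm of X and the norm of Y are average non rough. -/

import Mathlib

open Metric NormedSpace ENNReal

section Defs

variable (Z : Type*) [NormedAddCommGroup Z] [NormedSpace ℝ Z]

/-- The w*-slice of the closed unit ball of the dual of `Z` determined by `z : Z` and `α > 0`:
`S(B_{Z*}, z, α) = {f ∈ B_{Z*} : f(z) > sup_{g ∈ B_{Z*}} g(z) − α}`. -/
def wStarSlice (z : Z) (α : ℝ) : Set (StrongDual ℝ Z) :=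
  {f | f ∈ closedBall (0 : StrongDual ℝ Z) 1 ∧
    f z > sSup ((fun g : StrongDual ℝ Z => g z) '' closedBall (0 : StrongDual ℝ Z) 1) - α}

/-- The norm of `Z` is `ε`-rough: every w*-slice of `B_{Z*}` has diameter at least `ε`. -/
def EpsRough (ε : ℝ) : Prop :=
  ∀ (z : Z) (α : ℝ), 0 < α → ε ≤ diam (wStarSlice Z z α)

/-- The norm of `Z` is non rough: it is not `ε`-rough for any `ε > 0`. -/
def NonRough : Prop := ∀ ε > 0, ¬ EpsRough Z ε

/-- `Z*` has the w*-Ball Dentable Property. -/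
def WStarBDP : Prop :=
  ∀ ε > 0, ∃ (z : Z) (α : ℝ), 0 < α ∧ diam (wStarSlice Z z α) < ε

/-- `V` is a (relatively) w*-open subset of the closed unit ball `B_{Z*}`. -/
def IsRelWStarOpen (V : Set (StrongDual ℝ Z)) : Prop :=
  ∃ U : Set (WeakDual ℝ Z), IsOpen U ∧
    V = {f | f ∈ closedBall (0 : StrongDual ℝ Z) 1 ∧ StrongDual.toWeakDual f ∈ U}

/-- The norm of `Z` is weakly `ε`-average rough: every nonempty relatively w*-open
subset of `B_{Z*}` has diameter at least `ε`. -/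
def WeaklyEpsAvgRough (ε : ℝ) : Prop :=
  ∀ V : Set (StrongDual ℝ Z), IsRelWStarOpen Z V → V.Nonempty → ε ≤ diam V

/-- The norm of `Z` is weakly average non rough. -/
def WeaklyAvgNonRough : Prop := ∀ ε > 0, ¬ WeaklyEpsAvgRough Z ε

/-- `Z*` has the w*-Ball Huskable Property. -/
def WStarBHP : Prop :=
  ∀ ε > 0, ∃ V : Set (StrongDual ℝ Z), IsRelWStarOpen Z V ∧ V.Nonempty ∧ diam V < ε

/-- `D` is a convex combination of w*-slices of `B_{Z*}`, i.e. `D = ∑ λᵢ Sᵢ` (Minkowski sum)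
with each `Sᵢ` a w*-slice, `λᵢ > 0`, `∑ λᵢ = 1`. -/
def IsConvexCombWStarSlices (D : Set (StrongDual ℝ Z)) : Prop :=
  ∃ (n : ℕ) (l : Fin n → ℝ) (z : Fin n → Z) (α : Fin n → ℝ),
    (∀ i, 0 < l i) ∧ (∑ i, l i) = 1 ∧ (∀ i, 0 < α i) ∧
    D = {f | ∃ g : Fin n → StrongDual ℝ Z,
      (∀ i, g i ∈ wStarSlice Z (z i) (α i)) ∧ f = ∑ i, l i • g i}

/-- The norm of `Z` is `ε`-average rough: every convex combination of w*-slices of `B_{Z*}`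
has diameter at least `ε`. -/
def EpsAvgRough (ε : ℝ) : Prop :=
  ∀ D : Set (StrongDual ℝ Z), IsConvexCombWStarSlices Z D → ε ≤ diam D

/-- The norm of `Z` is average non rough. -/
def AvgNonRough : Prop := ∀ ε > 0, ¬ EpsAvgRough Z ε

/-- `Z*` has the w*-Ball Small Combination of Slice Property. -/
def WStarBSCSP : Prop :=
  ∀ ε > 0, ∃ D : Set (StrongDual ℝ Z), IsConvexCombWStarSlices Z D ∧ diam D < ε

/-- A slice of the closed unit ball `B_Z` determined by `f ∈ Z*` and `α > 0`. -/
def ballSlice (f : StrongDual ℝ Z) (α : ℝ) : Set Z :=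
  {x | x ∈ closedBall (0 : Z) 1 ∧ f x > sSup (f '' closedBall (0 : Z) 1) - α}

/-- `Z` has the Ball Dentable Property. -/
def BDP : Prop :=
  ∀ ε > 0, ∃ (f : StrongDual ℝ Z) (α : ℝ), 0 < α ∧ diam (ballSlice Z f α) < ε

/-- `V` is a nonempty relatively weakly open subset of the closed unit ball `B_Z`. -/
def IsRelWeakOpen (V : Set Z) : Prop :=
  ∃ U : Set (WeakSpace ℝ Z), IsOpen U ∧
    V = {x | x ∈ closedBall (0 : Z) 1 ∧ toWeakSpace ℝ Z x ∈ U}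

/-- `Z` has the Ball Huskable Property. -/
def BHP : Prop :=
  ∀ ε > 0, ∃ V : Set Z, IsRelWeakOpen Z V ∧ V.Nonempty ∧ diam V < ε

/-- `D` is a convex combination of slices of `B_Z`. -/
def IsConvexCombSlices (D : Set Z) : Prop :=
  ∃ (n : ℕ) (l : Fin n → ℝ) (f : Fin n → StrongDual ℝ Z) (α : Fin n → ℝ),
    (∀ i, 0 < l i) ∧ (∑ i, l i) = 1 ∧ (∀ i, 0 < α i) ∧
    D = {x | ∃ g : Fin n → Z,
      (∀ i, g i ∈ ballSlice Z (f i) (α i)) ∧ x = ∑ i, l i • g i}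

/-- `Z` has the Ball Small Combination of Slice Property. -/
def BSCSP : Prop :=
  ∀ ε > 0, ∃ D : Set Z, IsConvexCombSlices Z D ∧ diam D < ε

variable {Z}

/-- The closed unit ball of a subspace `F` of the dual, viewed as a subset of the dual. -/
def subBall (F : Submodule ℝ (StrongDual ℝ Z)) : Set (StrongDual ℝ Z) :=
  {f | f ∈ F ∧ ‖f‖ ≤ 1}

/-- The w*-slice of `B_F` determined by `z : Z` and `α`. -/
def subWStarSlice (F : Submodule ℝ (StrongDual ℝ Z)) (z : Z) (α : ℝ) : Set (StrongDual ℝ Z) :=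
  {f | f ∈ subBall F ∧ f z > sSup ((fun g : StrongDual ℝ Z => g z) '' subBall F) - α}

/-- The subspace `F` of `Z*` has the w*-Ball Dentable Property. -/
def SubWStarBDP (F : Submodule ℝ (StrongDual ℝ Z)) : Prop :=
  ∀ ε > 0, ∃ (z : Z) (α : ℝ), 0 < α ∧ diam (subWStarSlice F z α) < ε

/-- `V` is a relatively w*-open subset of `B_F`. -/
def IsRelWStarOpenSub (F : Submodule ℝ (StrongDual ℝ Z)) (V : Set (StrongDual ℝ Z)) : Prop :=
  ∃ U : Set (WeakDual ℝ Z), IsOpen U ∧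
    V = {f | f ∈ subBall F ∧ StrongDual.toWeakDual f ∈ U}

/-- The subspace `F` of `Z*` has the w*-Ball Huskable Property. -/
def SubWStarBHP (F : Submodule ℝ (StrongDual ℝ Z)) : Prop :=
  ∀ ε > 0, ∃ V : Set (StrongDual ℝ Z), IsRelWStarOpenSub F V ∧ V.Nonempty ∧ diam V < ε

/-- `D` is a convex combination of w*-slices of `B_F`. -/
def IsConvexCombSubWStarSlices (F : Submodule ℝ (StrongDual ℝ Z)) (D : Set (StrongDual ℝ Z)) : Prop :=
  ∃ (n : ℕ) (l : Fin n → ℝ) (z : Fin n → Z) (α : Fin n → ℝ),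
    (∀ i, 0 < l i) ∧ (∑ i, l i) = 1 ∧ (∀ i, 0 < α i) ∧
    D = {f | ∃ g : Fin n → StrongDual ℝ Z,
      (∀ i, g i ∈ subWStarSlice F (z i) (α i)) ∧ f = ∑ i, l i • g i}

/-- The subspace `F` of `Z*` has the w*-Ball Small Combination of Slice Property. -/
def SubWStarBSCSP (F : Submodule ℝ (StrongDual ℝ Z)) : Prop :=
  ∀ ε > 0, ∃ D : Set (StrongDual ℝ Z), IsConvexCombSubWStarSlices F D ∧ diam D < ε

/-- The annihilator `Y^⊥ = {f ∈ Z* : f(y) = 0 for all y ∈ Y}` of a subspace `Y` of `Z`. -/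
noncomputable def annih (Y : Submodule ℝ Z) : Submodule ℝ (StrongDual ℝ Z) where
  carrier := {f | ∀ y ∈ Y, f y = 0}
  add_mem' := by intro f g hf hg y hy; simp [hf y hy, hg y hy]
  zero_mem' := by intro y hy; simp
  smul_mem' := by intro c f hf y hy; simp [hf y hy]

end Defs

/-! If `π : Z → X` splits off `X` as an `ℓ₁`-summand of `Z`, every w*-slice of `B_{X*}` lifts to
a w*-slice of `B_{Z*}`: extend `g ∈ B_{X*}` by `g ∘ π + h ∘ (1 - ι π)`, where `h` norms the
complementary part of the slicing vector. Restriction along `ι` undoes the lift and does not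
increase distances, so small convex combinations of w*-slices in `Z*` produce small ones in `X*`. -/

section Transfer

variable {X Z : Type*} [NormedAddCommGroup X] [NormedSpace ℝ X]
  [NormedAddCommGroup Z] [NormedSpace ℝ Z]

theorem sSup_apply_closedBall_dual (z : Z) :
    sSup ((fun g : StrongDual ℝ Z => g z) '' closedBall 0 1) = ‖z‖ := by
  obtain ⟨g, hg, hgz⟩ := exists_dual_vector'' ℝ z
  have hub : ∀ a ∈ (fun g : StrongDual ℝ Z => g z) '' closedBall 0 1, a ≤ ‖z‖ := by
    rintro _ ⟨f, hf, rfl⟩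
    exact (le_abs_self _).trans (f.le_of_opNorm_le (mem_closedBall_zero_iff.mp hf) z |>.trans
      (one_mul _).le)
  refine le_antisymm (Real.sSup_le hub (norm_nonneg z)) ?_
  exact le_csSup ⟨‖z‖, hub⟩ ⟨g, mem_closedBall_zero_iff.mpr hg, by simpa using hgz⟩

theorem mem_wStarSlice_iff {z : Z} {α : ℝ} {f : StrongDual ℝ Z} :
    f ∈ wStarSlice Z z α ↔ ‖f‖ ≤ 1 ∧ ‖z‖ - α < f z := by
  rw [wStarSlice, Set.mem_ofPred_eq, mem_closedBall_zero_iff, sSup_apply_closedBall_dual,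
    gt_iff_lt]

theorem IsConvexCombWStarSlices.isBounded {D : Set (StrongDual ℝ Z)}
    (hD : IsConvexCombWStarSlices Z D) : Bornology.IsBounded D := by
  obtain ⟨n, l, z, α, hl, hl1, -, rfl⟩ := hD
  refine isBounded_closedBall (x := 0) (r := 1) |>.subset ?_
  rintro _ ⟨g, hg, rfl⟩
  exact (convex_closedBall 0 1).sum_mem (fun i _ => (hl i).le) hl1
    fun i _ => mem_closedBall_zero_iff.mpr (mem_wStarSlice_iff.mp (hg i)).1

variable (ι : X →L[ℝ] Z) (π : Z →L[ℝ] X) (hπι : ∀ x, π (ι x) = x)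
  (hnorm : ∀ z, ‖z‖ = ‖π z‖ + ‖z - ι (π z)‖)
include hπι hnorm

theorem lipschitzWith_comp_of_lSummand :
    LipschitzWith 1 fun f : StrongDual ℝ Z => f.comp ι := by
  have hι : ‖ι‖ ≤ 1 := ι.opNorm_le_bound zero_le_one fun x => by
    simp [hnorm (ι x), hπι]
  refine LipschitzWith.of_dist_le_mul fun f f' => ?_
  rw [dist_eq_norm, dist_eq_norm, ← ContinuousLinearMap.sub_comp, NNReal.coe_one, one_mul]
  exact (f - f').opNorm_comp_le ι |>.trans (mul_le_of_le_one_right (norm_nonneg _) hι)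

theorem exists_lift_wStarSlice_of_lSummand (z : Z) (α : ℝ) :
    ∃ E : StrongDual ℝ X → StrongDual ℝ Z, (∀ g x, E g (ι x) = g x) ∧
      ∀ g ∈ wStarSlice X (π z) α, E g ∈ wStarSlice Z z α := by
  obtain ⟨h, hh, hhz⟩ := exists_dual_vector'' ℝ (z - ι (π z))
  set ρ : Z →L[ℝ] Z := ContinuousLinearMap.id ℝ Z - ι.comp π
  refine ⟨fun g => g.comp π + h.comp ρ, fun g x => by simp [ρ, hπι], fun g hg => ?_⟩
  rw [mem_wStarSlice_iff] at hg ⊢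
  refine ⟨ContinuousLinearMap.opNorm_le_bound _ zero_le_one fun w => ?_, ?_⟩
  · calc ‖g (π w) + h (ρ w)‖ ≤ ‖g (π w)‖ + ‖h (ρ w)‖ := norm_add_le _ _
      _ ≤ ‖π w‖ + ‖ρ w‖ :=
        add_le_add (g.le_of_opNorm_le hg.1 _ |>.trans_eq (one_mul _))
          (h.le_of_opNorm_le hh _ |>.trans_eq (one_mul _))
      _ = 1 * ‖w‖ := by rw [one_mul, hnorm w]; rfl
  · have : h (ρ z) = ‖z - ι (π z)‖ := by simpa [ρ] using hhz
    simp only [add_apply, ContinuousLinearMap.comp_apply, this]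
    linarith [hnorm z, hg.2]

theorem AvgNonRough.of_lSummand (h : AvgNonRough Z) : AvgNonRough X := by
  intro ε hε hX
  refine h ε hε fun D hD => ?_
  have hDb := hD.isBounded
  obtain ⟨n, l, z, α, hl, hl1, hα, rfl⟩ := hD
  choose E hEι hE using fun i => exists_lift_wStarSlice_of_lSummand ι π hπι hnorm (z i) (α i)
  set D' : Set (StrongDual ℝ X) := {f | ∃ g : Fin n → StrongDual ℝ X,
    (∀ i, g i ∈ wStarSlice X (π (z i)) (α i)) ∧ f = ∑ i, l i • g i}
  set restrict := fun f : StrongDual ℝ Z => f.comp ι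
  have hD' : D' ⊆ restrict '' {f | ∃ g : Fin n → StrongDual ℝ Z,
      (∀ i, g i ∈ wStarSlice Z (z i) (α i)) ∧ f = ∑ i, l i • g i} := by
    rintro _ ⟨g, hg, rfl⟩
    refine ⟨∑ i, l i • E i (g i), ⟨_, fun i => hE i _ (hg i), rfl⟩, ?_⟩
    ext x
    simp [restrict, hEι]
  have hlip : LipschitzWith 1 restrict := lipschitzWith_comp_of_lSummand ι π hπι hnorm
  calc ε ≤ diam D' := hX D' ⟨n, l, fun i => π (z i), α, hl, hl1, hα, rfl⟩
    _ ≤ diam (restrict '' _) := diam_mono hD' (hlip.isBounded_image hDb)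
    _ ≤ diam _ := by simpa using hlip.diam_image_le _ hDb

end Transfer

theorem statement_10_general (X Y : Type*) [NormedAddCommGroup X] [NormedSpace ℝ X]
    [NormedAddCommGroup Y] [NormedSpace ℝ Y]
    (h : AvgNonRough (WithLp 1 (X × Y))) :
    AvgNonRough X ∧ AvgNonRough Y := by
  set e := (WithLp.prodContinuousLinearEquiv 1 ℝ X Y).symm.toContinuousLinearMap
  refine ⟨h.of_lSummand (e.comp (.inl ℝ X Y)) (WithLp.fstL 1 ℝ X Y) (fun _ => rfl) fun z => ?_,
    h.of_lSummand (e.comp (.inr ℝ X Y)) (WithLp.sndL 1 ℝ X Y) (fun _ => rfl) fun z => ?_⟩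
  · rw [WithLp.prod_norm_eq_of_L1 z, WithLp.prod_norm_eq_of_L1 (z - _)]
    simp [e]
  · rw [WithLp.prod_norm_eq_of_L1 z, WithLp.prod_norm_eq_of_L1 (z - _), add_comm]
    simp [e]

/-- If the norm of `X ⊕₁ Y` is average non rough, then both the norms of `X` and
`Y` are average non rough. -/
theorem statement_10 (X Y : Type*) [NormedAddCommGroup X] [NormedSpace ℝ X] [CompleteSpace X]
    [NormedAddCommGroup Y] [NormedSpace ℝ Y] [CompleteSpace Y]
    (h : AvgNonRough (WithLp 1 (X × Y))) :
    AvgNonRough X ∧ AvgNonRough Y :=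
  statement_10_general X Y h
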